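/- arXiv:0810.4812 — 2 statements merged into one kernel-verified Lean document; each statement's English description precedes it below -/
import Mathlib

section
/- Symmetric Lovász Local Lemma for SAT: if F is a k-CNF formula (k ≥ 2) in which each clause shares variables with at most 2^{k-2} other clauses, then F is satisfiable. -/
/-!
Count assignments of the finitely many variables occurring in `F`. For `S ⊆ F` and `C ∈ F`,
at most a `2 / 2^k` fraction of the models of `S` falsify `C`. Indeed, let `T ⊆ S` be the
clauses sharing no variable with `C` and `N` the at most `2^(k-2)` others. Exactly a `2^(-k)`
fraction of the models of `T` falsify `C`, since `T` does not constrain the variables of `C`;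
and by induction each `D ∈ N` is falsified by at most a `2 / 2^k` fraction of the models of `T`,
so at most half of them fail some clause of `N`, i.e. `T` has at most twice as many models as
`S`. Adding the clauses of `F` one at a time thus at most halves the number of models, which
therefore stays positive.
-/

open Finset

theorem card_filter_eq_two_pow_mul_card_filter_eqOn {ι : Type*} [Fintype ι] [DecidableEq ι]
    (p : ι → Prop) [DecidablePred p] (P : (ι → Bool) → Prop) [DecidablePred P]
    (hP : ∀ f g : ι → Bool, (∀ i, ¬p i → f i = g i) → (P f ↔ P g)) (b : ι → Bool) :
    #{f | P f} = 2 ^ Fintype.card {i // p i} * #{f | P f ∧ ∀ i, p i → f i = b i} := by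
  classical
  let e := Equiv.piEquivPiSubtypeProd p fun _ => Bool
  let Q : ({i // ¬ p i} → Bool) → Prop := fun g => P (e.symm (fun i => b i, g))
  have hPQ : ∀ f, P f ↔ Q (e f).2 := fun f =>
    hP _ _ fun i hi => by simp [e, Equiv.piEquivPiSubtypeProd_symm_apply, hi]
  have hall : #{f | P f} = #(univ ×ˢ univ.filter Q) :=
    card_equiv e fun f => by simp [hPQ]
  have hfix : #{f | P f ∧ ∀ i, p i → f i = b i} =
      #({fun i : {i // p i} => b i} ×ˢ univ.filter Q) :=
    card_equiv e fun f => by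
      simp only [mem_filter, mem_univ, true_and, mem_product, mem_singleton, hPQ, funext_iff,
        Subtype.forall]
      exact and_comm
  rw [hall, hfix, card_product, card_product, card_univ, Fintype.card_fun, Fintype.card_bool,
    card_singleton, one_mul]

namespace CNF

variable {V : Type*} [DecidableEq V]

def vars (C : Finset (V × Bool)) : Finset V := C.image Prod.fst

def Satisfies (α : V → Bool) (C : Finset (V × Bool)) : Prop := ∃ l ∈ C, α l.1 = l.2

instance (α : V → Bool) (C : Finset (V × Bool)) : Decidable (Satisfies α C) :=
  inferInstanceAs (Decidable (∃ l ∈ C, α l.1 = l.2))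

-- Assignments are counted on a finite set `U` of variables and extended by `false` off `U`.
def extend (U : Finset V) (f : U → Bool) : V → Bool :=
  fun v => if h : v ∈ U then f ⟨v, h⟩ else false

def models (U : Finset V) (S : Finset (Finset (V × Bool))) : Finset (U → Bool) :=
  {f | ∀ D ∈ S, Satisfies (extend U f) D}

def falsifiers (U : Finset V) (C : Finset (V × Bool)) : Finset (U → Bool) :=
  {f | ¬ Satisfies (extend U f) C}

theorem card_vars {C : Finset (V × Bool)}
    (hC : ∀ l₁ ∈ C, ∀ l₂ ∈ C, l₁.1 = l₂.1 → l₁ = l₂) : #(vars C) = #C :=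
  card_image_of_injOn fun l₁ h₁ l₂ h₂ => hC l₁ h₁ l₂ h₂

theorem satisfies_congr {α β : V → Bool} {C : Finset (V × Bool)}
    (h : ∀ v ∈ vars C, α v = β v) : Satisfies α C ↔ Satisfies β C := by
  have h' : ∀ l ∈ C, α l.1 = β l.1 := fun l hl => h l.1 (mem_image_of_mem _ hl)
  exact ⟨fun ⟨l, hl, hα⟩ => ⟨l, hl, (h' l hl).symm.trans hα⟩,
    fun ⟨l, hl, hβ⟩ => ⟨l, hl, (h' l hl).trans hβ⟩⟩

-- The falsifying value of a variable is the opposite of its sign in `C`.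
theorem not_satisfies_iff {C : Finset (V × Bool)}
    (hC : ∀ l₁ ∈ C, ∀ l₂ ∈ C, l₁.1 = l₂.1 → l₁ = l₂) (α : V → Bool) :
    ¬ Satisfies α C ↔ ∀ v ∈ vars C, α v = decide ((v, true) ∉ C) := by
  have hneg : ∀ v, (v, false) ∈ C → (v, true) ∉ C := fun v hf ht => by
    simpa using hC _ ht _ hf rfl
  simp only [Satisfies, vars, not_exists, not_and, forall_mem_image, Prod.forall]
  refine forall_congr' fun v => forall_congr' fun b => ?_
  cases b <;> by_cases ht : (v, true) ∈ C <;> simp_all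

theorem card_models_insert (U : Finset V) (S : Finset (Finset (V × Bool)))
    (C : Finset (V × Bool)) :
    #(models U (insert C S)) + #(models U S ∩ falsifiers U C) = #(models U S) := by
  have : models U (insert C S) = models U S \ falsifiers U C := by
    ext f
    simp [models, falsifiers, and_comm]
  rw [this, card_sdiff_add_card_inter]

theorem models_subset_models (U : Finset V) {S T : Finset (Finset (V × Bool))} (h : S ⊆ T) :
    models U T ⊆ models U S :=
  fun _ hf => by
    simp only [models, mem_filter] at hf ⊢
    exact ⟨hf.1, fun D hD => hf.2 D (h hD)⟩

theorem card_models_le_add_sum (U : Finset V) {S T N : Finset (Finset (V × Bool))}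
    (h : S ⊆ T ∪ N) :
    #(models U T) ≤ #(models U S) + ∑ D ∈ N, #(models U T ∩ falsifiers U D) := by
  have hcover : models U T ⊆ models U S ∪ N.biUnion fun D => models U T ∩ falsifiers U D := by
    intro f hf
    by_cases hS : f ∈ models U S
    · exact mem_union_left _ hS
    · simp only [models, mem_filter, mem_univ, true_and, not_forall] at hf hS
      obtain ⟨D, hDS, hD⟩ := hS
      have hDN : D ∈ N := (mem_union.1 (h hDS)).resolve_left fun hDT => hD (hf D hDT)
      refine mem_union_right _ (mem_biUnion.2 ⟨D, hDN, ?_⟩)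
      simpa [models, falsifiers, hD] using hf
  exact (card_le_card hcover).trans ((card_union_le _ _).trans (by gcongr; exact card_biUnion_le))

theorem card_models_eq_two_pow_mul {U : Finset V} {S : Finset (Finset (V × Bool))}
    {C : Finset (V × Bool)} (hC : ∀ l₁ ∈ C, ∀ l₂ ∈ C, l₁.1 = l₂.1 → l₁ = l₂)
    (hCU : vars C ⊆ U) (hS : ∀ D ∈ S, Disjoint (vars D) (vars C)) :
    #(models U S) = 2 ^ #C * #(models U S ∩ falsifiers U C) := by
  have hP : ∀ f g : U → Bool, (∀ v : U, (v : V) ∉ vars C → f v = g v) →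
      ((∀ D ∈ S, Satisfies (extend U f) D) ↔ ∀ D ∈ S, Satisfies (extend U g) D) := by
    refine fun f g hfg => forall₂_congr fun D hD => satisfies_congr fun v hv => ?_
    unfold extend
    split_ifs with hvU
    · exact hfg ⟨v, hvU⟩ (disjoint_left.1 (hS D hD) hv)
    · rfl
  have hfals : models U S ∩ falsifiers U C = univ.filter fun f =>
      (∀ D ∈ S, Satisfies (extend U f) D) ∧
        ∀ v : U, (v : V) ∈ vars C → f v = decide (((v : V), true) ∉ C) := by
    ext f
    simp only [models, falsifiers, mem_inter, mem_filter, mem_univ, true_and,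
      not_satisfies_iff hC, Subtype.forall]
    refine and_congr_right fun _ => ⟨fun h v _ hv => ?_, fun h v hv => ?_⟩
    · simpa [extend, hCU hv] using h v hv
    · simpa [extend, hCU hv] using h v (hCU hv) hv
  have hcard : Fintype.card {v : U // (v : V) ∈ vars C} = #C := by
    rw [Fintype.card_congr (Equiv.subtypeSubtypeEquivSubtype fun hv => hCU hv),
      Fintype.card_coe, card_vars hC]
  rw [hfals, ← hcard]
  exact card_filter_eq_two_pow_mul_card_filter_eqOn _ _ hP _

theorem card_models_le_two_mul {U : Finset V} {k : ℕ} (hk : 2 ≤ k)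
    {S T N : Finset (Finset (V × Bool))} (hST : S ⊆ T ∪ N) (hN : #N ≤ 2 ^ (k - 2))
    (hD : ∀ D ∈ N, 2 ^ k * #(models U T ∩ falsifiers U D) ≤ 2 * #(models U T)) :
    #(models U T) ≤ 2 * #(models U S) := by
  obtain ⟨j, rfl⟩ : ∃ j, k = j + 2 := ⟨k - 2, by omega⟩
  rw [Nat.add_sub_cancel] at hN
  have hsum : 2 ^ (j + 2) * ∑ D ∈ N, #(models U T ∩ falsifiers U D) ≤
      2 ^ j * (2 * #(models U T)) :=
    calc _ = ∑ D ∈ N, 2 ^ (j + 2) * #(models U T ∩ falsifiers U D) := mul_sum _ _ _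
      _ ≤ ∑ _D ∈ N, 2 * #(models U T) := sum_le_sum hD
      _ = #N * (2 * #(models U T)) := by rw [sum_const, smul_eq_mul]
      _ ≤ 2 ^ j * (2 * #(models U T)) := by gcongr
  have hbound := Nat.mul_le_mul_left (2 ^ (j + 2)) (card_models_le_add_sum U hST)
  rw [mul_add, pow_add] at hbound
  rw [pow_add] at hsum
  have : 2 ^ j * (4 * #(models U T)) ≤ 2 ^ j * (4 * #(models U S) + 2 * #(models U T)) := by
    nlinarith
  have := Nat.le_of_mul_le_mul_left this (by positivity)
  omega

section LocalLemma

variable {k : ℕ} {F : Finset (Finset (V × Bool))} {U : Finset V}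

theorem two_pow_mul_card_models_inter_falsifiers_le (hk : 2 ≤ k)
    (hcard : ∀ C ∈ F, #C = k)
    (hdist : ∀ C ∈ F, ∀ l₁ ∈ C, ∀ l₂ ∈ C, l₁.1 = l₂.1 → l₁ = l₂)
    (hnbhd : ∀ C ∈ F, #{D ∈ F | D ≠ C ∧ (vars D ∩ vars C).Nonempty} ≤ 2 ^ (k - 2))
    (hU : ∀ C ∈ F, vars C ⊆ U) (S : Finset (Finset (V × Bool))) (hSF : S ⊆ F)
    {C : Finset (V × Bool)} (hC : C ∈ F) :
    2 ^ k * #(models U S ∩ falsifiers U C) ≤ 2 * #(models U S) := by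
  induction S using Finset.strongInduction generalizing C with
  | H S ih =>
  by_cases hCS : C ∈ S
  · have : models U S ∩ falsifiers U C = ∅ := by
      ext f
      simp only [models, falsifiers, mem_inter, mem_filter, mem_univ, true_and,
        notMem_empty, iff_false, not_and, not_not]
      exact fun hf => hf C hCS
    simp [this]
  set T := S.filter fun D => Disjoint (vars D) (vars C)
  set N := S.filter fun D => ¬ Disjoint (vars D) (vars C)
  have hTS : T ⊆ S := filter_subset _ _
  have hST : S ⊆ T ∪ N := (filter_union_filter_not_eq _ S).ge
  have hN : #N ≤ 2 ^ (k - 2) := by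
    refine (card_le_card fun D hD => ?_).trans (hnbhd C hC)
    obtain ⟨hDS, hDC⟩ := mem_filter.1 hD
    exact mem_filter.2 ⟨hSF hDS, ne_of_mem_of_not_mem hDS hCS,
      not_disjoint_iff_nonempty_inter.1 hDC⟩
  have hIH : ∀ D ∈ N, 2 ^ k * #(models U T ∩ falsifiers U D) ≤ 2 * #(models U T) := by
    intro D hD
    obtain ⟨hDS, hDC⟩ := mem_filter.1 hD
    have hTS' : T ⊂ S :=
      (ssubset_iff_of_subset hTS).2 ⟨D, hDS, fun hDT => hDC (mem_filter.1 hDT).2⟩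
    exact ih T hTS' (hTS.trans hSF) (hSF hDS)
  calc 2 ^ k * #(models U S ∩ falsifiers U C)
      ≤ 2 ^ k * #(models U T ∩ falsifiers U C) := by
        gcongr
        exact models_subset_models U hTS
    _ = #(models U T) := by
        rw [card_models_eq_two_pow_mul (hdist C hC) (hU C hC) fun D hD => (mem_filter.1 hD).2,
          hcard C hC]
    _ ≤ 2 * #(models U S) := card_models_le_two_mul hk hST hN hIH

theorem card_models_pos (hk : 2 ≤ k)
    (hcard : ∀ C ∈ F, #C = k)
    (hdist : ∀ C ∈ F, ∀ l₁ ∈ C, ∀ l₂ ∈ C, l₁.1 = l₂.1 → l₁ = l₂)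
    (hnbhd : ∀ C ∈ F, #{D ∈ F | D ≠ C ∧ (vars D ∩ vars C).Nonempty} ≤ 2 ^ (k - 2))
    (hU : ∀ C ∈ F, vars C ⊆ U) (S : Finset (Finset (V × Bool))) (hSF : S ⊆ F) :
    0 < #(models U S) := by
  induction S using Finset.induction_on with
  | empty => simp [models]
  | insert C S _ ih =>
    have hpos := ih ((subset_insert C S).trans hSF)
    have hbad := two_pow_mul_card_models_inter_falsifiers_le hk hcard hdist hnbhd hU S
      ((subset_insert C S).trans hSF) (hSF (mem_insert_self C S))
    have h4 : 4 ≤ 2 ^ k := by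
      calc 4 = 2 ^ 2 := rfl
        _ ≤ 2 ^ k := Nat.pow_le_pow_right two_pos hk
    have := (Nat.mul_le_mul_right _ h4).trans hbad
    have := card_models_insert U S C
    omega

end LocalLemma

end CNF

/-- Symmetric Lovász Local Lemma for SAT: if `F` is a `k`-CNF formula (`k ≥ 2`) in which
every clause shares variables with at most `2^(k-2)` other clauses, then `F` is
satisfiable. -/
theorem stmt17 {V : Type*} [DecidableEq V] (k : ℕ) (hk : 2 ≤ k)
    (F : Finset (Finset (V × Bool)))
    (hcard : ∀ C ∈ F, C.card = k)
    (hdist : ∀ C ∈ F, ∀ l₁ ∈ C, ∀ l₂ ∈ C, l₁.1 = l₂.1 → l₁ = l₂)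
    (hnbhd : ∀ C ∈ F,
      (F.filter (fun D => D ≠ C ∧ ((D.image Prod.fst) ∩ (C.image Prod.fst)).Nonempty)).card
        ≤ 2 ^ (k - 2)) :
    ∃ α : V → Bool, ∀ C ∈ F, ∃ l ∈ C, α l.1 = l.2 := by
  let U := F.biUnion CNF.vars
  have hU : ∀ C ∈ F, CNF.vars C ⊆ U := fun C hC => subset_biUnion_of_mem CNF.vars hC
  obtain ⟨f, hf⟩ := card_pos.1 (CNF.card_models_pos hk hcard hdist hnbhd hU F subset_rfl)
  exact ⟨CNF.extend U f, (mem_filter.1 hf).2⟩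
end

section
/- Progress invariant of the local correction procedure (abstract form): let F be a set of clauses and suppose a procedure, when called on a violated clause C, only modifies variables occurring in clauses labelling vertices of its recursion tree τ, and only returns when all clauses in Γ⁺(D) are satisfied for every clause D it recursed on. Then upon termination, every clause of F sharing a variable with vbl(τ) is satisfied; in particular, the set of violated clauses after the call is a strict subset of the set before. -/
/-!
Let `m` be the last step whose label shares a variable with a clause `D`. The call made at
step `m` returns at some `t' > m` with `D` satisfied, say by the literal `l`; every later step
resamples only variables of labels disjoint from `vbl D`, so `l` still holds at the end. A clause
sharing no variable with any label is never touched, so it keeps its truth value. Hence no clause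
becomes violated, while the root clause, violated at the start, is satisfied at the end.
-/

namespace LocalCorrection

variable {V : Type*}

def vbl [DecidableEq V] (D : Finset (V × Bool)) : Finset V := D.image Prod.fst

def Satisfies (a : V → Bool) (D : Finset (V × Bool)) : Prop := ∃ l ∈ D, a l.1 = l.2

lemma eq_of_forall_succ_eq {β : Type*} (f : ℕ → β) {a b : ℕ} (hab : a ≤ b)
    (h : ∀ s, a ≤ s → s < b → f (s + 1) = f s) : f b = f a := by
  induction b, hab using Nat.le_induction with
  | base => rfl
  | succ n han ih => rw [h n han n.lt_succ_self, ih fun s h₁ h₂ => h s h₁ (by omega)]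

lemma exists_last_lt {P : ℕ → Prop} {T : ℕ} (h : ∃ t < T, P t) :
    ∃ m < T, P m ∧ ∀ s, m < s → s < T → ¬ P s := by
  classical
  obtain ⟨t, htT, ht⟩ := h
  obtain ⟨m, hm, hmax⟩ := ((Finset.range T).filter P).exists_max_image id
    ⟨t, Finset.mem_filter.2 ⟨Finset.mem_range.2 htT, ht⟩⟩
  rw [Finset.mem_filter, Finset.mem_range] at hm
  refine ⟨m, hm.1, hm.2, fun s hms hsT hs => ?_⟩
  have := hmax s (Finset.mem_filter.2 ⟨Finset.mem_range.2 hsT, hs⟩)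
  simp only [id] at this
  omega

section Run

variable [DecidableEq V] {F : Finset (Finset (V × Bool))} {T : ℕ} {α : ℕ → V → Bool}
  {lbl : ℕ → Finset (V × Bool)}

lemma apply_eq_of_forall_notMem_vbl
    (hmod : ∀ t < T, ∀ x : V, x ∉ vbl (lbl t) → α (t + 1) x = α t x)
    {x : V} {a b : ℕ} (hab : a ≤ b) (hbT : b ≤ T)
    (hx : ∀ s, a ≤ s → s < b → x ∉ vbl (lbl s)) : α b x = α a x :=
  eq_of_forall_succ_eq (α · x) hab fun s has hsb => hmod s (by omega) x (hx s has hsb)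

lemma satisfies_final_of_exists_vbl_inter_nonempty
    (hmod : ∀ t < T, ∀ x : V, x ∉ vbl (lbl t) → α (t + 1) x = α t x)
    (hret : ∀ t < T, ∃ t', t < t' ∧ t' ≤ T ∧ ∀ D ∈ F,
      (vbl D ∩ vbl (lbl t)).Nonempty → Satisfies (α t') D)
    {D : Finset (V × Bool)} (hD : D ∈ F) (h : ∃ t < T, (vbl D ∩ vbl (lbl t)).Nonempty) :
    Satisfies (α T) D := by
  obtain ⟨m, hmT, hm, hlast⟩ := exists_last_lt h
  obtain ⟨t', hmt', ht'T, hsat⟩ := hret m hmT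
  obtain ⟨l, hl, hlt'⟩ := hsat D hD hm
  have huntouched : ∀ s, t' ≤ s → s < T → l.1 ∉ vbl (lbl s) := fun s hs hsT hx =>
    hlast s (by omega) hsT ⟨l.1, Finset.mem_inter.2 ⟨Finset.mem_image_of_mem _ hl, hx⟩⟩
  exact ⟨l, hl, by rw [apply_eq_of_forall_notMem_vbl hmod ht'T le_rfl huntouched, hlt']⟩

lemma satisfies_final_of_satisfies_initial
    (hmod : ∀ t < T, ∀ x : V, x ∉ vbl (lbl t) → α (t + 1) x = α t x)
    (hret : ∀ t < T, ∃ t', t < t' ∧ t' ≤ T ∧ ∀ D ∈ F,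
      (vbl D ∩ vbl (lbl t)).Nonempty → Satisfies (α t') D)
    {D : Finset (V × Bool)} (hD : D ∈ F) (h₀ : Satisfies (α 0) D) :
    Satisfies (α T) D := by
  by_cases hshare : ∃ t < T, (vbl D ∩ vbl (lbl t)).Nonempty
  · exact satisfies_final_of_exists_vbl_inter_nonempty hmod hret hD hshare
  · obtain ⟨l, hl, hl₀⟩ := h₀
    have huntouched : ∀ s, 0 ≤ s → s < T → l.1 ∉ vbl (lbl s) := fun s _ hsT hx =>
      hshare ⟨s, hsT, l.1, Finset.mem_inter.2 ⟨Finset.mem_image_of_mem _ hl, hx⟩⟩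
    exact ⟨l, hl, by
      rw [apply_eq_of_forall_notMem_vbl hmod (Nat.zero_le T) le_rfl huntouched, hl₀]⟩

end Run

end LocalCorrection

open LocalCorrection in
/-- Progress invariant of the local correction procedure (abstract form): consider a run
with states `α 0, …, α T` where step `t` resamples only the variables of the clause
`lbl t`, and every call made on `lbl t` returns at some later time `t' ≤ T` at which all
clauses sharing variables with `lbl t` are satisfied. Then every clause of `F` sharing a
variable with some resampled clause is satisfied by `α T`; in particular, if the run was
started on a violated (nonempty) clause `lbl 0 ∈ F`, the set of violated clauses at the
end is a strict subset of the set of violated clauses at the beginning. -/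
theorem stmt18 {V : Type*} [DecidableEq V] (F : Finset (Finset (V × Bool))) (T : ℕ)
    (α : ℕ → V → Bool) (lbl : ℕ → Finset (V × Bool))
    (hmod : ∀ t < T, ∀ x : V, x ∉ (lbl t).image Prod.fst → α (t + 1) x = α t x)
    (hret : ∀ t < T, ∃ t', t < t' ∧ t' ≤ T ∧ ∀ D ∈ F,
      ((D.image Prod.fst) ∩ ((lbl t).image Prod.fst)).Nonempty → ∃ l ∈ D, α t' l.1 = l.2)
    (hT : 0 < T) (hroot : lbl 0 ∈ F) (hne : (lbl 0).Nonempty)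
    (hviol : ¬ ∃ l ∈ lbl 0, α 0 l.1 = l.2) :
    (∀ D ∈ F, (∃ t < T, ((D.image Prod.fst) ∩ ((lbl t).image Prod.fst)).Nonempty) →
      ∃ l ∈ D, α T l.1 = l.2) ∧
    {D | D ∈ F ∧ ¬ ∃ l ∈ D, α T l.1 = l.2} ⊂ {D | D ∈ F ∧ ¬ ∃ l ∈ D, α 0 l.1 = l.2} := by
  have hfinal := fun D (hD : D ∈ F) => satisfies_final_of_exists_vbl_inter_nonempty hmod hret hD
  have hsubset : {D | D ∈ F ∧ ¬ Satisfies (α T) D} ⊆ {D | D ∈ F ∧ ¬ Satisfies (α 0) D} :=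
    fun D ⟨hD, hviolT⟩ => ⟨hD, fun h₀ => hviolT (satisfies_final_of_satisfies_initial hmod hret hD h₀)⟩
  obtain ⟨x, hx⟩ := hne
  have hroot_final : Satisfies (α T) (lbl 0) :=
    hfinal _ hroot ⟨0, hT, x.1, Finset.mem_inter.2
      ⟨Finset.mem_image_of_mem _ hx, Finset.mem_image_of_mem _ hx⟩⟩
  exact ⟨hfinal, (Set.ssubset_iff_of_subset hsubset).2
    ⟨lbl 0, ⟨hroot, hviol⟩, fun h => h.2 hroot_final⟩⟩
end
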